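/- Let N be prime and p ≥ 5 with N ≡ 1 mod p, and s = v_p(N-1). Then ℤ_p⟦λ - 1⟧/(λ + λ⁻¹ - λ^N - λ^{-N}) is isomorphic to ℤ_p⟦λ - 1⟧/((λ - 1)(λ^{p^s} - 1)). -/

import Mathlib

/-!
Writing `λ = 1 + X`, the generator factors as
`λ + λ⁻¹ - λ^N - λ^{-N} = -λ^{-N} (λ^{N+1} - 1)(λ^{N-1} - 1)`.
Since `λ^n - 1 = (λ - 1)(1 + λ + ⋯ + λ^{n-1})` and the geometric sum has constant coefficient `n`,
`λ^n - 1` is associated to `λ - 1` whenever `p ∤ n`. With `N - 1 = p^s m`, `p ∤ m`, this applies to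
`λ^{N+1} - 1` (as `p ∤ N + 1` for `p ≥ 3`) and, with `λ^{p^s}` in place of `λ`, to `λ^{N-1} - 1`.
So both generators are associated and the two ideals coincide.
-/

open PowerSeries

lemma PadicInt.isUnit_natCast_of_not_dvd {p : ℕ} [Fact p.Prime] {n : ℕ} (h : ¬p ∣ n) :
    IsUnit (n : ℤ_[p]) :=
  PadicInt.isUnit_iff.mpr <| norm_natCast_eq_one_iff.mpr <|
    (Fact.out : p.Prime).coprime_iff_not_dvd.mpr h

lemma Nat.exists_eq_pow_padicValNat_mul_not_dvd {p n : ℕ} [Fact p.Prime] (hn : n ≠ 0) :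
    ∃ m, ¬p ∣ m ∧ n = p ^ padicValNat p n * m := by
  refine ⟨ordCompl[p] n, Nat.not_dvd_ordCompl Fact.out hn, ?_⟩
  rw [← Nat.factorization_def n Fact.out, Nat.ordProj_mul_ordCompl_eq_self]

lemma Nat.not_dvd_add_one_of_dvd_sub_one {p n : ℕ} (hp : 3 ≤ p) (h : p ∣ n - 1) :
    ¬p ∣ n + 1 := by
  intro h'
  have := Nat.le_of_dvd (by omega) (Nat.dvd_sub h' h)
  omega

lemma Units.add_inv_sub_pow_sub_inv_pow {R : Type*} [CommRing R] (u : Rˣ) {n : ℕ} (hn : 0 < n) :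
    (u : R) + ↑u⁻¹ - ↑u ^ n - ↑u⁻¹ ^ n
      = -(↑u⁻¹ ^ n * ((u : R) ^ (n + 1) - 1) * ((u : R) ^ (n - 1) - 1)) := by
  obtain ⟨k, rfl⟩ := Nat.exists_eq_add_of_lt hn
  simp only [zero_add, Nat.add_sub_cancel]
  apply (u ^ (k + 1)).isUnit.mul_left_cancel
  have h1 : (u : R) ^ (k + 1) * ↑u⁻¹ ^ (k + 1) = 1 := by rw [← mul_pow, Units.mul_inv, one_pow]
  have h2 : (u : R) ^ (k + 1) * ↑u⁻¹ = u ^ k := by rw [pow_succ, mul_assoc, Units.mul_inv, mul_one]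
  push_cast
  linear_combination (-1 + ((u : R) ^ (k + 2) - 1) * ((u : R) ^ k - 1)) * h1 + h2

lemma PowerSeries.associated_sub_one_pow_sub_one {R : Type*} [CommRing R] {a : R⟦X⟧}
    (ha : constantCoeff a = 1) {n : ℕ} (hn : IsUnit (n : R)) :
    Associated (a - 1) (a ^ n - 1) := by
  rw [← geom_sum_mul]
  refine associated_unit_mul_right _ _ (isUnit_iff_constantCoeff.mpr ?_)
  simpa [map_sum, ha] using hn

/-- With `λ = 1 + X` a unit of `ℤ_p⟦λ - 1⟧`, the quotient rings
`ℤ_p⟦λ - 1⟧/(λ + λ⁻¹ - λ^N - λ^{-N})` and `ℤ_p⟦λ - 1⟧/((λ - 1)(λ^{p^s} - 1))` are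
isomorphic, where `N ≡ 1 mod p` is prime, `p ≥ 5` is prime, and `s = v_p(N - 1)`. -/
theorem stmt_4 (p N : ℕ) [Fact p.Prime] (hN : N.Prime) (hp5 : 5 ≤ p)
    (hdvd : p ∣ N - 1) (s : ℕ) (hs : s = padicValNat p (N - 1)) :
    Nonempty
      ((PowerSeries (PadicInt p) ⧸ Ideal.span
          {(1 + PowerSeries.X : PowerSeries (PadicInt p))
              + Ring.inverse (1 + PowerSeries.X : PowerSeries (PadicInt p))
              - (1 + PowerSeries.X) ^ N
              - (Ring.inverse (1 + PowerSeries.X : PowerSeries (PadicInt p))) ^ N})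
        ≃+*
       (PowerSeries (PadicInt p) ⧸ Ideal.span
          {((1 + PowerSeries.X : PowerSeries (PadicInt p)) - 1)
              * ((1 + PowerSeries.X) ^ (p ^ s) - 1)})) := by
  set L : ℤ_[p]⟦X⟧ := 1 + X
  have hL : constantCoeff L = 1 := by simp [L]
  have hLu : IsUnit L := isUnit_iff_constantCoeff.mpr (hL ▸ isUnit_one)
  obtain ⟨m, hpm, hm⟩ := Nat.exists_eq_pow_padicValNat_mul_not_dvd (p := p)
    (show N - 1 ≠ 0 by have := hN.two_le; omega)
  rw [← hs] at hm
  have hfac : Associated ((L ^ (N + 1) - 1) * (L ^ (N - 1) - 1)) ((L - 1) * (L ^ p ^ s - 1)) := by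
    refine (associated_sub_one_pow_sub_one hL ?_).symm.mul_mul ?_
    · exact PadicInt.isUnit_natCast_of_not_dvd (Nat.not_dvd_add_one_of_dvd_sub_one (by omega) hdvd)
    · rw [hm, pow_mul]
      exact (associated_sub_one_pow_sub_one (by simp [hL]) (PadicInt.isUnit_natCast_of_not_dvd hpm)).symm
  refine ⟨Ideal.quotEquivOfEq (Ideal.span_singleton_eq_span_singleton.mpr ?_)⟩
  rw [← hLu.unit_spec, Ring.inverse_unit, Units.add_inv_sub_pow_sub_inv_pow _ hN.pos, mul_assoc]
  exact (associated_unit_mul_left _ _ ((hLu.unit⁻¹).isUnit.pow N)).neg_left.trans hfac
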